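/- arXiv:2108.10594 — 2 statements merged into one kernel-verified Lean document; each statement's English description precedes it below -/
import Mathlib

section
/- If v is a stationary distribution of the full transition matrix M (i.e., v_h ≥ 0 for all h, Σ_h v_h = 1, and vM = v), then the clustered vector μ defined by μ_{(A,x,y)} := Σ_{h ∈ A_{Axy}} v_h is a stationary distribution of the reduced transition matrix M' (i.e., μ has nonnegative entries summing to 1 and μM' = μ). -/
open Finset Matrix
open scoped Classical

noncomputable section

/-- A memory-1 strategy: an initial cooperation probability `init` and conditional
cooperation probabilities `cond A j`: the probability to cooperate in the next round
when one's own action in the current round was `A` (`true` = cooperate) and exactly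
`j` co-players cooperated. -/
structure Mem1 where
  init : ℝ
  cond : Bool → ℕ → ℝ

/-- All entries of the strategy lie in `[0,1]`. -/
def Mem1.valid (p : Mem1) : Prop :=
  p.init ∈ Set.Icc (0:ℝ) 1 ∧ ∀ A j, p.cond A j ∈ Set.Icc (0:ℝ) 1

/-- A full state: the action of each of the `n` players (`true` = cooperate). -/
abbrev FullState (n : ℕ) := Fin n → Bool

/-- The number of cooperators `σ(h)` in a full state. -/
def nCoop {n : ℕ} (h : FullState n) : ℕ :=
  (Finset.univ.filter fun i => h i = true).card

/-- The full transition matrix `M` on the `2^n` full states, given each player's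
memory-1 strategy: `m_{h,h'} = ∏ i u_i`, where `u_i` is player `i`'s probability of
choosing action `h' i` given that in state `h` his action was `h i` and
`σ(h) - f(h i)` of his co-players cooperated. -/
def fullM {n : ℕ} (strat : Fin n → Mem1) : Matrix (FullState n) (FullState n) ℝ :=
  Matrix.of fun h h' => ∏ i,
    (if h' i then (strat i).cond (h i) (nCoop h - if h i then 1 else 0)
     else 1 - (strat i).cond (h i) (nCoop h - if h i then 1 else 0))

/-- The initial full-state distribution `v(0)`: each player cooperates independently
with the initial probability of his own strategy, `v(0)_h = ∏ i |1 - f(A_i) - p^i_0|`. -/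
def fullInit {n : ℕ} (strat : Fin n → Mem1) : FullState n → ℝ :=
  fun h => ∏ i, |1 - (if h i then (1:ℝ) else 0) - (strat i).init|

/-- Binomial transfer factor: for a block of `tot` co-players of one strategy of which
`x` cooperated in the last round, the probability that exactly `x'` of them cooperate
in the next round, where previous cooperators cooperate with probability `pc` and
previous defectors with probability `pd`:
`Σ_{j=0}^{x'} C(x,j) pc^j (1-pc)^{x-j} C(tot-x, x'-j) pd^{x'-j} (1-pd)^{(tot-x)-(x'-j)}`. -/
def transfer (pc pd : ℝ) (x tot x' : ℕ) : ℝ :=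
  ∑ j ∈ Finset.range (x' + 1),
    (x.choose j : ℝ) * pc ^ j * (1 - pc) ^ (x - j) *
    ((tot - x).choose (x' - j) : ℝ) * pd ^ (x' - j) * (1 - pd) ^ ((tot - x) - (x' - j))

/-- The discounted mean distribution `(1-δ) Σ_{t=0}^∞ δ^t (w₀ T^t)`. -/
def discMean {α : Type*} [Fintype α] [DecidableEq α]
    (δ : ℝ) (w0 : α → ℝ) (T : Matrix α α ℝ) : α → ℝ :=
  fun j => (1 - δ) * ∑' t : ℕ, δ ^ t * (w0 ᵥ* T ^ t) j

/-- The focal player's one-round payoff in full state `h`: `a_{σ(h)-1}` if he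
cooperates, `b_{σ(h)}` if he defects. -/
def focalPayoff {n : ℕ} (focal : Fin n) (a b : ℕ → ℝ) (h : FullState n) : ℝ :=
  if h focal then a (nCoop h - 1) else b (nCoop h)

/-- Strategy assignment for two strategies: `assign i = true` means player `i` uses `p`,
otherwise player `i` uses `q`. -/
def strat2 {n : ℕ} (p q : Mem1) (assign : Fin n → Bool) : Fin n → Mem1 :=
  fun i => if assign i then p else q

/-- The cluster `A_{Axy}`: full states in which the focal player plays `A`, exactly `x`
of the `p`-co-players cooperate, and exactly `y` of the `q`-co-players cooperate. -/
def cluster {n : ℕ} (focal : Fin n) (assign : Fin n → Bool) (A : Bool) (x y : ℕ) :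
    Finset (FullState n) :=
  Finset.univ.filter fun h =>
    h focal = A ∧
    (Finset.univ.filter fun i => i ≠ focal ∧ assign i = true ∧ h i = true).card = x ∧
    (Finset.univ.filter fun i => i ≠ focal ∧ assign i = false ∧ h i = true).card = y

/-- The reduced transition matrix `M'` on the `2(k+1)(n-k)` clustered states `(A,x,y)`
with `A ∈ {C,D}`, `x ∈ {0,…,k}`, `y ∈ {0,…,n-1-k}`, for a focal player using `p`. -/
def redM (n k : ℕ) (p q : Mem1) :
    Matrix (Bool × Fin (k+1) × Fin (n-k)) (Bool × Fin (k+1) × Fin (n-k)) ℝ :=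
  Matrix.of fun s s' =>
    match s, s' with
    | (A, x, y), (A', x', y') =>
      |1 - (if A' then (1:ℝ) else 0) - p.cond A ((x:ℕ) + (y:ℕ))| *
      transfer (p.cond true ((x:ℕ) + (y:ℕ) + (if A then 1 else 0) - 1))
               (p.cond false ((x:ℕ) + (y:ℕ) + (if A then 1 else 0))) (x:ℕ) k (x':ℕ) *
      transfer (q.cond true ((x:ℕ) + (y:ℕ) + (if A then 1 else 0) - 1))
               (q.cond false ((x:ℕ) + (y:ℕ) + (if A then 1 else 0))) (y:ℕ) (n-1-k) (y':ℕ)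

/-- The initial clustered distribution `μ(0)`. -/
def redInit (n k : ℕ) (p q : Mem1) : Bool × Fin (k+1) × Fin (n-k) → ℝ :=
  fun s => match s with
  | (A, x, y) =>
    |1 - (if A then (1:ℝ) else 0) - p.init| *
    ((k.choose (x:ℕ) : ℝ) * p.init ^ (x:ℕ) * (1 - p.init) ^ (k - (x:ℕ))) *
    (((n-1-k).choose (y:ℕ) : ℝ) * q.init ^ (y:ℕ) * (1 - q.init) ^ ((n-1-k) - (y:ℕ)))

lemma group_sum {ι : Type*} [DecidableEq ι] (S T : Finset ι) (hT : T ⊆ S)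
    (pc pd : ℝ) (x' : ℕ) :
    ∑ U ∈ S.powersetCard x',
      ((∏ i ∈ U, (if i ∈ T then pc else pd)) *
       ∏ i ∈ S \ U, (if i ∈ T then 1 - pc else 1 - pd))
    = transfer pc pd T.card S.card x' := by
  have key : ∑ U ∈ S.powersetCard x',
      ((∏ i ∈ U, (if i ∈ T then pc else pd)) *
       ∏ i ∈ S \ U, (if i ∈ T then 1 - pc else 1 - pd))
      = ∑ z ∈ (Finset.range (x'+1)).sigma
          (fun j => T.powersetCard j ×ˢ (S \ T).powersetCard (x'-j)),
          (pc ^ z.1 * (1-pc) ^ (T.card - z.1)) *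
          (pd ^ (x'-z.1) * (1-pd) ^ ((S.card - T.card) - (x'-z.1))) := by
    refine Finset.sum_nbij' (fun U => ⟨(U ∩ T).card, (U ∩ T, U \ T)⟩)
      (fun z => z.2.1 ∪ z.2.2) ?_ ?_ ?_ ?_ ?_
    · intro U hU
      rw [mem_powersetCard] at hU
      obtain ⟨hUS, hUc⟩ := hU
      have h1 : (U ∩ T).card + (U \ T).card = x' := by
        rw [Finset.card_inter_add_card_sdiff, hUc]
      simp only [Finset.mem_sigma, Finset.mem_product, Finset.mem_range, mem_powersetCard]
      exact ⟨Nat.lt_succ_of_le (by omega), ⟨inter_subset_right, trivial⟩,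
        ⟨sdiff_subset_sdiff hUS (le_refl _), by omega⟩⟩
    · rintro ⟨j, U1, U2⟩ hz
      dsimp only
      simp only [Finset.mem_sigma, Finset.mem_product, mem_powersetCard, Finset.mem_range] at hz
      obtain ⟨hj, ⟨hU1T, hU1c⟩, ⟨hU2, hU2c⟩⟩ := hz
      refine mem_powersetCard.2 ⟨union_subset (hU1T.trans hT) (hU2.trans sdiff_subset), ?_⟩
      rw [Finset.card_union_of_disjoint, hU1c, hU2c]
      · omega
      · exact Finset.disjoint_left.2 fun a ha hb => (Finset.mem_sdiff.1 (hU2 hb)).2 (hU1T ha)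
    · intro U hU
      dsimp only
      ext a
      simp only [Finset.mem_union, Finset.mem_inter, Finset.mem_sdiff]
      tauto
    · rintro ⟨j, U1, U2⟩ hz
      dsimp only
      simp only [Finset.mem_sigma, Finset.mem_product, mem_powersetCard, Finset.mem_range] at hz
      obtain ⟨hj, ⟨hU1T, hU1c⟩, ⟨hU2, hU2c⟩⟩ := hz
      have hd : Disjoint U2 T := Finset.disjoint_left.2 fun a ha hb => (Finset.mem_sdiff.1 (hU2 ha)).2 hb
      have e1 : (U1 ∪ U2) ∩ T = U1 := by
        rw [Finset.union_inter_distrib_right, Finset.inter_eq_left.2 hU1T,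
          Finset.disjoint_iff_inter_eq_empty.1 hd, Finset.union_empty]
      have e2 : (U1 ∪ U2) \ T = U2 := by
        rw [Finset.union_sdiff_distrib, Finset.sdiff_eq_empty_iff_subset.2 hU1T,
          Finset.empty_union, Finset.sdiff_eq_self_of_disjoint hd]
      refine Sigma.ext ?_ ?_
      · simp [e1, hU1c]
      · simp [e1, e2]
    · intro U hU
      dsimp only
      rw [mem_powersetCard] at hU
      obtain ⟨hUS, hUc⟩ := hU
      have h1 : (U ∩ T).card + (U \ T).card = x' := by
        rw [Finset.card_inter_add_card_sdiff, hUc]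
      rw [Finset.prod_ite, Finset.prod_ite]
      simp only [Finset.prod_const]
      have e1 : Finset.filter (fun i => i ∈ T) U = U ∩ T := Finset.filter_mem_eq_inter
      have e2 : Finset.filter (fun i => i ∉ T) U = U \ T := (Finset.sdiff_eq_filter U T).symm
      have e3 : Finset.filter (fun i => i ∈ T) (S \ U) = T \ U := by
        ext a; simp only [Finset.mem_filter, Finset.mem_sdiff]
        exact ⟨fun ⟨⟨h1,h2⟩,h3⟩ => ⟨h3, h2⟩, fun ⟨h1,h2⟩ => ⟨⟨hT h1, h2⟩, h1⟩⟩
      have e4 : Finset.filter (fun i => i ∉ T) (S \ U) = (S \ T) \ U := by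
        ext a; simp only [Finset.mem_filter, Finset.mem_sdiff]; tauto
      rw [e1, e2, e3, e4]
      have c3 : (T \ U).card = T.card - (U ∩ T).card := by
        have : T \ U = T \ (U ∩ T) := by
          ext a; simp only [Finset.mem_sdiff, Finset.mem_inter]; tauto
        rw [this, Finset.card_sdiff_of_subset inter_subset_right]
      have c4 : ((S \ T) \ U).card = (S.card - T.card) - (U \ T).card := by
        have : (S \ T) \ U = (S \ T) \ (U \ T) := by
          ext a; simp only [Finset.mem_sdiff]; tauto
        rw [this, Finset.card_sdiff_of_subset (sdiff_subset_sdiff hUS (le_refl _)), Finset.card_sdiff_of_subset hT]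
      rw [c3, c4]
      have h2 : (U \ T).card = x' - (U ∩ T).card := by omega
      rw [h2]
      ring
  rw [key, Finset.sum_sigma]
  unfold transfer
  refine Finset.sum_congr rfl fun j hj => ?_
  rw [Finset.sum_product]
  simp only [Finset.sum_const, Finset.card_powersetCard, nsmul_eq_mul, Finset.card_sdiff_of_subset hT]
  push_cast
  ring

section structural

variable {n : ℕ} (focal : Fin n) (assign : Fin n → Bool)

/-- The set of `p`-co-players. -/
def Pset : Finset (Fin n) := Finset.univ.filter fun i => i ≠ focal ∧ assign i = true
/-- The set of `q`-co-players. -/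
def Qset : Finset (Fin n) := Finset.univ.filter fun i => i ≠ focal ∧ assign i = false

/-- Cooperators among the `p`-co-players. -/
def TP (h : FullState n) : Finset (Fin n) :=
  Finset.univ.filter fun i => i ≠ focal ∧ assign i = true ∧ h i = true
/-- Cooperators among the `q`-co-players. -/
def TQ (h : FullState n) : Finset (Fin n) :=
  Finset.univ.filter fun i => i ≠ focal ∧ assign i = false ∧ h i = true

lemma mem_Pset {i : Fin n} : i ∈ Pset focal assign ↔ i ≠ focal ∧ assign i = true := by
  simp [Pset]

lemma mem_Qset {i : Fin n} : i ∈ Qset focal assign ↔ i ≠ focal ∧ assign i = false := by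
  simp [Qset]

lemma mem_TP {h : FullState n} {i : Fin n} :
    i ∈ TP focal assign h ↔ i ≠ focal ∧ assign i = true ∧ h i = true := by simp [TP]

lemma mem_TQ {h : FullState n} {i : Fin n} :
    i ∈ TQ focal assign h ↔ i ≠ focal ∧ assign i = false ∧ h i = true := by simp [TQ]

lemma TP_subset (h : FullState n) : TP focal assign h ⊆ Pset focal assign := by
  intro i hi
  rw [mem_TP] at hi
  rw [mem_Pset]
  exact ⟨hi.1, hi.2.1⟩

lemma TQ_subset (h : FullState n) : TQ focal assign h ⊆ Qset focal assign := by
  intro i hi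
  rw [mem_TQ] at hi
  rw [mem_Qset]
  exact ⟨hi.1, hi.2.1⟩

lemma PQ_disjoint : Disjoint (Pset focal assign) (Qset focal assign) := by
  rw [Finset.disjoint_left]
  intro i hi hj
  rw [mem_Pset] at hi
  rw [mem_Qset] at hj
  simp [hi.2] at hj

lemma focal_notMem_PQ : focal ∉ Pset focal assign ∪ Qset focal assign := by
  simp [mem_Pset, mem_Qset]

lemma univ_eq_insert : (Finset.univ : Finset (Fin n)) =
    insert focal (Pset focal assign ∪ Qset focal assign) := by
  ext i
  simp only [Finset.mem_univ, Finset.mem_insert, Finset.mem_union, mem_Pset, mem_Qset, true_iff]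
  by_cases hif : i = focal
  · exact Or.inl hif
  · cases ha : assign i
    · exact Or.inr (Or.inr ⟨hif, rfl⟩)
    · exact Or.inr (Or.inl ⟨hif, rfl⟩)

lemma Qset_card (k : ℕ)
    (hcard : (Finset.univ.filter fun i => i ≠ focal ∧ assign i = true).card = k) :
    (Qset focal assign).card = n - 1 - k ∧ k ≤ n - 1 := by
  have hP : (Pset focal assign).card = k := hcard
  have hu : (insert focal (Pset focal assign ∪ Qset focal assign)).card = n := by
    rw [← univ_eq_insert]; simp
  rw [Finset.card_insert_of_notMem (focal_notMem_PQ focal assign),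
    Finset.card_union_of_disjoint (PQ_disjoint focal assign), hP] at hu
  omega

lemma nCoop_eq (h : FullState n) :
    nCoop h = (if h focal then 1 else 0) + (TP focal assign h).card + (TQ focal assign h).card := by
  unfold nCoop
  rw [univ_eq_insert focal assign, Finset.filter_insert, Finset.filter_union]
  have hTP : (Pset focal assign).filter (fun i => h i = true) = TP focal assign h := by
    ext i; simp only [Finset.mem_filter, mem_Pset, mem_TP]; tauto
  have hTQ : (Qset focal assign).filter (fun i => h i = true) = TQ focal assign h := by
    ext i; simp only [Finset.mem_filter, mem_Qset, mem_TQ]; tauto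
  have hdisj : Disjoint ((Pset focal assign).filter (fun i => h i = true))
      ((Qset focal assign).filter (fun i => h i = true)) :=
    Finset.disjoint_filter_filter (PQ_disjoint focal assign)
  by_cases hf : h focal = true
  · have hnm : focal ∉ (Pset focal assign).filter (fun i => h i = true) ∪
        (Qset focal assign).filter (fun i => h i = true) := by
      rw [Finset.mem_union, hTP, hTQ, mem_TP, mem_TQ]
      push_neg
      exact ⟨fun hc => absurd rfl hc, fun hc => absurd rfl hc⟩
    rw [if_pos hf, if_pos hf, Finset.card_insert_of_notMem hnm,
      Finset.card_union_of_disjoint hdisj, hTP, hTQ]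
    omega
  · rw [if_neg hf, if_neg (by simpa using hf)]
    rw [Finset.card_union_of_disjoint hdisj, hTP, hTQ]
    omega

lemma mem_cluster {A : Bool} {x y : ℕ} {h : FullState n} :
    h ∈ cluster focal assign A x y ↔
      h focal = A ∧ (TP focal assign h).card = x ∧ (TQ focal assign h).card = y := by
  simp only [cluster, Finset.mem_filter, Finset.mem_univ, true_and, TP, TQ]

end structural

lemma cluster_partition {n k : ℕ} (hkn : k < n)
    (focal : Fin n) (assign : Fin n → Bool)
    (hcard : (Finset.univ.filter fun i => i ≠ focal ∧ assign i = true).card = k)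
    (F : FullState n → ℝ) :
    ∑ s : Bool × Fin (k+1) × Fin (n-k),
      ∑ h ∈ cluster focal assign s.1 (s.2.1 : ℕ) (s.2.2 : ℕ), F h = ∑ h, F h := by
  obtain ⟨hQ, hk1⟩ := Qset_card focal assign k hcard
  have hxb : ∀ h : FullState n, (TP focal assign h).card < k + 1 := fun h =>
    Nat.lt_succ_of_le (hcard ▸ Finset.card_le_card (TP_subset focal assign h))
  have hyb : ∀ h : FullState n, (TQ focal assign h).card < n - k := fun h => by
    have := Finset.card_le_card (TQ_subset focal assign h)
    rw [hQ] at this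
    omega
  have key := Finset.sum_fiberwise (Finset.univ : Finset (FullState n))
    (fun h => ((h focal, ⟨(TP focal assign h).card, hxb h⟩,
      ⟨(TQ focal assign h).card, hyb h⟩) : Bool × Fin (k+1) × Fin (n-k))) F
  rw [← key]
  refine Finset.sum_congr rfl fun s _ => Finset.sum_congr ?_ fun _ _ => rfl
  ext h
  obtain ⟨A, x, y⟩ := s
  simp only [Finset.mem_filter, Finset.mem_univ, true_and, mem_cluster, Prod.mk.injEq,
    Fin.ext_iff]

lemma lump_sum {n k : ℕ} (p q : Mem1) (hp : p.valid)
    (focal : Fin n) (assign : Fin n → Bool) (hassign : assign focal = true)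
    (hcard : (Finset.univ.filter fun i => i ≠ focal ∧ assign i = true).card = k)
    (A : Bool) (x y : ℕ) (h : FullState n) (hh : h ∈ cluster focal assign A x y)
    (A' : Bool) (x' y' : ℕ) :
    ∑ h' ∈ cluster focal assign A' x' y', fullM (strat2 p q assign) h h'
    = |1 - (if A' then (1:ℝ) else 0) - p.cond A (x + y)| *
      transfer (p.cond true (x + y + (if A then 1 else 0) - 1))
               (p.cond false (x + y + (if A then 1 else 0))) x k x' *
      transfer (q.cond true (x + y + (if A then 1 else 0) - 1))
               (q.cond false (x + y + (if A then 1 else 0))) y (n-1-k) y' := by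
  obtain ⟨hQc, hk1⟩ := Qset_card focal assign k hcard
  have hPc : (Pset focal assign).card = k := hcard
  rw [mem_cluster] at hh
  obtain ⟨hA, hx, hy⟩ := hh
  have hnc : nCoop h = (if A then 1 else 0) + x + y := by
    rw [nCoop_eq focal assign h, hA, hx, hy]
  -- abbreviations
  set pc := p.cond true (x + y + (if A then 1 else 0) - 1) with hpc
  set pd := p.cond false (x + y + (if A then 1 else 0)) with hpd
  set qc := q.cond true (x + y + (if A then 1 else 0) - 1) with hqc
  set qd := q.cond false (x + y + (if A then 1 else 0)) with hqd
  set bwd : Finset (Fin n) × Finset (Fin n) → FullState n :=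
    fun UV => fun i => if i = focal then A' else decide (i ∈ UV.1 ∪ UV.2) with hbwd
  -- TP/TQ of bwd
  have hTPbwd : ∀ U V : Finset (Fin n), U ⊆ Pset focal assign → V ⊆ Qset focal assign →
      TP focal assign (bwd (U, V)) = U := by
    intro U V hU hV
    ext i
    rw [mem_TP]
    constructor
    · rintro ⟨hif, hai, hb⟩
      rw [hbwd] at hb
      simp only [if_neg hif, decide_eq_true_eq, Finset.mem_union] at hb
      rcases hb with hb | hb
      · exact hb
      · exact absurd ((mem_Qset focal assign).1 (hV hb)).2 (by simp [hai])
    · intro hi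
      have hiP := (mem_Pset focal assign).1 (hU hi)
      refine ⟨hiP.1, hiP.2, ?_⟩
      rw [hbwd]
      simp only [if_neg hiP.1, decide_eq_true_eq, Finset.mem_union]
      exact Or.inl hi
  have hTQbwd : ∀ U V : Finset (Fin n), U ⊆ Pset focal assign → V ⊆ Qset focal assign →
      TQ focal assign (bwd (U, V)) = V := by
    intro U V hU hV
    ext i
    rw [mem_TQ]
    constructor
    · rintro ⟨hif, hai, hb⟩
      rw [hbwd] at hb
      simp only [if_neg hif, decide_eq_true_eq, Finset.mem_union] at hb
      rcases hb with hb | hb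
      · exact absurd ((mem_Pset focal assign).1 (hU hb)).2 (by simp [hai])
      · exact hb
    · intro hi
      have hiQ := (mem_Qset focal assign).1 (hV hi)
      refine ⟨hiQ.1, hiQ.2, ?_⟩
      rw [hbwd]
      simp only [if_neg hiQ.1, decide_eq_true_eq, Finset.mem_union]
      exact Or.inr hi
  -- Step 1: reindex the sum
  have step1 : ∑ h' ∈ cluster focal assign A' x' y', fullM (strat2 p q assign) h h'
      = ∑ UV ∈ (Pset focal assign).powersetCard x' ×ˢ (Qset focal assign).powersetCard y',
          fullM (strat2 p q assign) h (bwd UV) := by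
    have rt : ∀ h' ∈ cluster focal assign A' x' y',
        bwd (TP focal assign h', TQ focal assign h') = h' := by
      intro h' hh'
      rw [mem_cluster] at hh'
      obtain ⟨hA', _, _⟩ := hh'
      funext i
      simp only [hbwd]
      by_cases hif : i = focal
      · rw [if_pos hif, hif, hA']
      · rw [if_neg hif]
        cases hb : h' i
        · simp only [Finset.mem_union, mem_TP, mem_TQ, hb, decide_eq_false_iff_not]
          push_neg
          refine ⟨fun _ _ => by simp, fun _ _ => by simp⟩
        · have : i ∈ TP focal assign h' ∪ TQ focal assign h' := by
            rw [Finset.mem_union, mem_TP, mem_TQ]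
            cases ha : assign i
            · exact Or.inr ⟨hif, rfl, hb⟩
            · exact Or.inl ⟨hif, rfl, hb⟩
          simp [this]
    refine Finset.sum_nbij' (fun h' => (TP focal assign h', TQ focal assign h')) bwd
      ?_ ?_ ?_ ?_ ?_
    · intro h' hh'
      rw [mem_cluster] at hh'
      obtain ⟨hA', hx', hy'⟩ := hh'
      refine Finset.mem_product.2 ⟨?_, ?_⟩
      · exact Finset.mem_powersetCard.2 ⟨TP_subset focal assign h', hx'⟩
      · exact Finset.mem_powersetCard.2 ⟨TQ_subset focal assign h', hy'⟩
    · rintro ⟨U, V⟩ hUV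
      rw [Finset.mem_product] at hUV
      obtain ⟨hU, hV⟩ := hUV
      rw [Finset.mem_powersetCard] at hU hV
      rw [mem_cluster]
      refine ⟨by rw [hbwd]; simp, ?_, ?_⟩
      · rw [show (TP focal assign (bwd (U,V))) = U from hTPbwd U V hU.1 hV.1]
        exact hU.2
      · rw [show (TQ focal assign (bwd (U,V))) = V from hTQbwd U V hU.1 hV.1]
        exact hV.2
    · exact rt
    · rintro ⟨U, V⟩ hUV
      rw [Finset.mem_product] at hUV
      obtain ⟨hU, hV⟩ := hUV
      rw [Finset.mem_powersetCard] at hU hV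
      exact Prod.ext (hTPbwd U V hU.1 hV.1) (hTQbwd U V hU.1 hV.1)
    · intro h' hh'
      rw [rt h' hh']
  rw [step1]
  -- Step 2: evaluate each term
  have prod_split : ∀ (S U : Finset (Fin n)), U ⊆ S → ∀ f g : Fin n → ℝ,
      (∏ i ∈ S, (if i ∈ U then f i else g i)) = (∏ i ∈ U, f i) * ∏ i ∈ S \ U, g i := by
    intro S U hU f g
    rw [Finset.prod_ite]
    congr 1
    · apply Finset.prod_congr _ fun _ _ => rfl
      ext i; simp only [Finset.mem_filter]
      exact ⟨fun hi => hi.2, fun hi => ⟨hU hi, hi⟩⟩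
    · apply Finset.prod_congr _ fun _ _ => rfl
      ext i; simp [Finset.mem_sdiff]
  have step2 : ∀ UV ∈ (Pset focal assign).powersetCard x' ×ˢ (Qset focal assign).powersetCard y',
      fullM (strat2 p q assign) h (bwd UV)
      = (if A' then p.cond A (x + y) else 1 - p.cond A (x + y)) *
        ((∏ i ∈ UV.1, (if i ∈ TP focal assign h then pc else pd)) *
         ∏ i ∈ Pset focal assign \ UV.1, (if i ∈ TP focal assign h then 1 - pc else 1 - pd)) *
        ((∏ i ∈ UV.2, (if i ∈ TQ focal assign h then qc else qd)) *
         ∏ i ∈ Qset focal assign \ UV.2, (if i ∈ TQ focal assign h then 1 - qc else 1 - qd)) := by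
    rintro ⟨U, V⟩ hUV
    rw [Finset.mem_product] at hUV
    obtain ⟨hU, hV⟩ := hUV
    rw [Finset.mem_powersetCard] at hU hV
    obtain ⟨hUP, hUc⟩ := hU
    obtain ⟨hVQ, hVc⟩ := hV
    simp only [fullM, Matrix.of_apply]
    rw [univ_eq_insert focal assign,
      Finset.prod_insert (focal_notMem_PQ focal assign),
      Finset.prod_union (PQ_disjoint focal assign)]
    have hfocal : (if bwd (U,V) focal = true
        then (strat2 p q assign focal).cond (h focal) (nCoop h - if h focal = true then 1 else 0)
        else 1 - (strat2 p q assign focal).cond (h focal) (nCoop h - if h focal = true then 1 else 0))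
        = (if A' then p.cond A (x + y) else 1 - p.cond A (x + y)) := by
      have h1 : bwd (U,V) focal = A' := by simp only [hbwd]; simp
      have h2 : strat2 p q assign focal = p := by simp [strat2, hassign]
      have h3 : nCoop h - (if A = true then 1 else 0) = x + y := by
        rw [hnc]; cases A <;> simp <;> omega
      simp only [h1, h2, hA, h3]
    have hPterm : ∀ i ∈ Pset focal assign,
        (if bwd (U,V) i = true
          then (strat2 p q assign i).cond (h i) (nCoop h - if h i = true then 1 else 0)
          else 1 - (strat2 p q assign i).cond (h i) (nCoop h - if h i = true then 1 else 0))
        = (if i ∈ U then (if i ∈ TP focal assign h then pc else pd)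
           else (if i ∈ TP focal assign h then 1 - pc else 1 - pd)) := by
      intro i hi
      obtain ⟨hif, hai⟩ := (mem_Pset focal assign).1 hi
      have h1 : (bwd (U,V) i = true) = (i ∈ U) := by
        simp only [hbwd]
        simp only [if_neg hif, decide_eq_true_eq, Finset.mem_union]
        apply propext
        constructor
        · rintro (hb | hb)
          · exact hb
          · exact absurd ((mem_Qset focal assign).1 (hVQ hb)).2 (by simp [hai])
        · exact Or.inl
      have h2 : strat2 p q assign i = p := by simp [strat2, hai]
      have h3 : (strat2 p q assign i).cond (h i) (nCoop h - if h i = true then 1 else 0)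
          = (if i ∈ TP focal assign h then pc else pd) := by
        rw [h2]
        cases hb : h i
        · have hmem : i ∉ TP focal assign h := by
            rw [mem_TP]; simp [hb]
          rw [if_neg hmem, hpd]
          congr 1
          rw [hnc]; cases A <;> simp <;> omega
        · have hmem : i ∈ TP focal assign h := by
            rw [mem_TP]; exact ⟨hif, hai, hb⟩
          rw [if_pos hmem, hpc]
          congr 1
          rw [hnc]; cases A <;> simp <;> omega
      rw [h3]
      simp only [h1]
      by_cases hiU : i ∈ U
      · rw [if_pos hiU, if_pos hiU]
      · rw [if_neg hiU, if_neg hiU]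
        split <;> rfl
    have hQterm : ∀ i ∈ Qset focal assign,
        (if bwd (U,V) i = true
          then (strat2 p q assign i).cond (h i) (nCoop h - if h i = true then 1 else 0)
          else 1 - (strat2 p q assign i).cond (h i) (nCoop h - if h i = true then 1 else 0))
        = (if i ∈ V then (if i ∈ TQ focal assign h then qc else qd)
           else (if i ∈ TQ focal assign h then 1 - qc else 1 - qd)) := by
      intro i hi
      obtain ⟨hif, hai⟩ := (mem_Qset focal assign).1 hi
      have h1 : (bwd (U,V) i = true) = (i ∈ V) := by
        simp only [hbwd]
        simp only [if_neg hif, decide_eq_true_eq, Finset.mem_union]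
        apply propext
        constructor
        · rintro (hb | hb)
          · exact absurd ((mem_Pset focal assign).1 (hUP hb)).2 (by simp [hai])
          · exact hb
        · exact Or.inr
      have h2 : strat2 p q assign i = q := by simp [strat2, hai]
      have h3 : (strat2 p q assign i).cond (h i) (nCoop h - if h i = true then 1 else 0)
          = (if i ∈ TQ focal assign h then qc else qd) := by
        rw [h2]
        cases hb : h i
        · have hmem : i ∉ TQ focal assign h := by
            rw [mem_TQ]; simp [hb]
          rw [if_neg hmem, hqd]
          congr 1
          rw [hnc]; cases A <;> simp <;> omega
        · have hmem : i ∈ TQ focal assign h := by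
            rw [mem_TQ]; exact ⟨hif, hai, hb⟩
          rw [if_pos hmem, hqc]
          congr 1
          rw [hnc]; cases A <;> simp <;> omega
      rw [h3]
      simp only [h1]
      by_cases hiV : i ∈ V
      · rw [if_pos hiV, if_pos hiV]
      · rw [if_neg hiV, if_neg hiV]
        split <;> rfl
    rw [hfocal, Finset.prod_congr rfl hPterm, Finset.prod_congr rfl hQterm,
      prod_split (Pset focal assign) U hUP _ _,
      prod_split (Qset focal assign) V hVQ _ _]
    ring
  rw [Finset.sum_congr rfl step2, Finset.sum_product]
  have hGS1 := group_sum (Pset focal assign) (TP focal assign h) (TP_subset focal assign h)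
    pc pd x'
  have hGS2 := group_sum (Qset focal assign) (TQ focal assign h) (TQ_subset focal assign h)
    qc qd y'
  rw [hx, hPc] at hGS1
  rw [hy, hQc] at hGS2
  have habs : |1 - (if A' then (1:ℝ) else 0) - p.cond A (x + y)|
      = (if A' then p.cond A (x + y) else 1 - p.cond A (x + y)) := by
    obtain ⟨h0, h1⟩ := hp.2 A (x + y)
    cases A'
    · rw [if_neg (by simp), if_neg (by simp),
        show 1 - (0:ℝ) - p.cond A (x+y) = 1 - p.cond A (x+y) by ring,
        abs_of_nonneg (by linarith)]
    · rw [if_pos rfl, if_pos rfl,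
        show 1 - (1:ℝ) - p.cond A (x+y) = -(p.cond A (x+y)) by ring,
        abs_neg, abs_of_nonneg h0]
  rw [habs, ← hGS1, ← hGS2, mul_assoc, Finset.sum_mul_sum, Finset.mul_sum]
  refine Finset.sum_congr rfl fun U hU => ?_
  rw [Finset.mul_sum]
  refine Finset.sum_congr rfl fun V hV => ?_
  ring
/-- Aggregating a stationary distribution of the full chain over the
clusters yields a stationary distribution of the reduced chain. -/
theorem state_clustering_stationary (n k : ℕ) (hn : 2 ≤ n) (hk : k ≤ n - 1)
    (p q : Mem1) (hp : p.valid) (hq : q.valid)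
    (focal : Fin n) (hfocal : (focal : ℕ) = 0)
    (assign : Fin n → Bool) (hassign : assign focal = true)
    (hcard : (Finset.univ.filter fun i => i ≠ focal ∧ assign i = true).card = k)
    (v : FullState n → ℝ) (hv0 : ∀ h, 0 ≤ v h) (hv1 : ∑ h, v h = 1)
    (hst : v ᵥ* fullM (strat2 p q assign) = v) :
    (∀ (A : Bool) (x : Fin (k+1)) (y : Fin (n-k)),
        0 ≤ ∑ h ∈ cluster focal assign A (x:ℕ) (y:ℕ), v h) ∧
    (∑ s : Bool × Fin (k+1) × Fin (n-k),
        ∑ h ∈ cluster focal assign s.1 (s.2.1 : ℕ) (s.2.2 : ℕ), v h) = 1 ∧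
    ((fun s : Bool × Fin (k+1) × Fin (n-k) =>
        ∑ h ∈ cluster focal assign s.1 (s.2.1 : ℕ) (s.2.2 : ℕ), v h) ᵥ* redM n k p q)
      = fun s : Bool × Fin (k+1) × Fin (n-k) =>
          ∑ h ∈ cluster focal assign s.1 (s.2.1 : ℕ) (s.2.2 : ℕ), v h := by
  have hkn : k < n := by omega
  refine ⟨fun A x y => Finset.sum_nonneg fun h _ => hv0 h, ?_, ?_⟩
  · rw [cluster_partition hkn focal assign hcard v]
    exact hv1
  · funext s'
    obtain ⟨A', x', y'⟩ := s'
    simp only [Matrix.vecMul, dotProduct]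
    have hlump : ∀ s : Bool × Fin (k+1) × Fin (n-k),
        ∀ h ∈ cluster focal assign s.1 (s.2.1 : ℕ) (s.2.2 : ℕ),
        redM n k p q s (A', x', y')
          = ∑ h' ∈ cluster focal assign A' (x' : ℕ) (y' : ℕ), fullM (strat2 p q assign) h h' := by
      rintro ⟨A, x, y⟩ h hh
      rw [lump_sum p q hp focal assign hassign hcard A (x:ℕ) (y:ℕ) h hh A' (x':ℕ) (y':ℕ)]
      rfl
    calc ∑ s : Bool × Fin (k+1) × Fin (n-k),
          (∑ h ∈ cluster focal assign s.1 (s.2.1 : ℕ) (s.2.2 : ℕ), v h) * redM n k p q s (A', x', y')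
        = ∑ s : Bool × Fin (k+1) × Fin (n-k),
            ∑ h ∈ cluster focal assign s.1 (s.2.1 : ℕ) (s.2.2 : ℕ),
              ∑ h' ∈ cluster focal assign A' (x' : ℕ) (y' : ℕ),
                v h * fullM (strat2 p q assign) h h' := by
          refine Finset.sum_congr rfl fun s _ => ?_
          rw [Finset.sum_mul]
          refine Finset.sum_congr rfl fun h hh => ?_
          rw [hlump s h hh, Finset.mul_sum]
      _ = ∑ h, ∑ h' ∈ cluster focal assign A' (x' : ℕ) (y' : ℕ),
            v h * fullM (strat2 p q assign) h h' :=
          cluster_partition hkn focal assign hcard _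
      _ = ∑ h' ∈ cluster focal assign A' (x' : ℕ) (y' : ℕ), ∑ h,
            v h * fullM (strat2 p q assign) h h' := Finset.sum_comm
      _ = ∑ h' ∈ cluster focal assign A' (x' : ℕ) (y' : ℕ), v h' := by
          refine Finset.sum_congr rfl fun h' _ => ?_
          have := congrFun hst h'
          simpa [Matrix.vecMul, dotProduct] using this
end
end

section
/- Suppose all n players use the same memory-1 strategy p (i.e., k = n−1, so the clustered states are (A,x) with A ∈ {C,D} and x ∈ {0,…,n−1}). Let 0 < δ < 1 and let v and μ be the discounted mean distributions of the full and reduced chains (v = (1−δ) Σ_{t=0}^∞ δ^t v(0) M^t and μ = (1−δ) Σ_{t=0}^∞ δ^t μ(0) (M')^t). Then the cooperation rate computed from the full chain equals that computed from the reduced chain: Σ_{h ∈ {C,D}^n} (σ(h)/n) v_h = Σ_{x=0}^{n−1} μ_{(C,x)} (x+1)/n + Σ_{x=0}^{n−1} μ_{(D,x)} x/n. -/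
/-!
Send a full state `h` to its cluster `(h focal, number of cooperating co-players)`. Given `h`,
the players act independently, so the number of co-players cooperating next round is the sum of
two independent binomial counts: the `x` former cooperators cooperate with probability
`p_{C,σ(h)-1}`, the `n-1-x` former defectors with `p_{D,σ(h)}`. Its law is read off the
coefficients of `(p_C X + 1 - p_C)^x (p_D X + 1 - p_D)^(n-1-x)`, which is what `transfer`
computes. So the probability of jumping from `h` into a cluster depends only on the cluster of
`h` and is the corresponding entry of `M'`: the full chain is lumpable onto the reduced one.
As `μ(0)` is the lumped `v(0)`, every `μ(0) M'^t` is the lumped `v(0) M^t`; `M` being stochastic,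
the discounted series converge and lumping passes to the discounted means. Finally `σ(h)` is a
function of the cluster of `h`.
-/

open Finset Matrix
open scoped Classical

noncomputable section

/-- The homogeneous reduced transition matrix `M'` on the `2n` clustered states `(A,x)`
with `A ∈ {C,D}`, `x ∈ {0,…,n-1}`, when all players use the same strategy `p`. -/
def redMHom (n : ℕ) (p : Mem1) : Matrix (Bool × Fin n) (Bool × Fin n) ℝ :=
  Matrix.of fun s s' =>
    match s, s' with
    | (A, x), (A', x') =>
      |1 - (if A' then (1:ℝ) else 0) - p.cond A (x:ℕ)| *
      transfer (p.cond true ((x:ℕ) + (if A then 1 else 0) - 1))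
               (p.cond false ((x:ℕ) + (if A then 1 else 0))) (x:ℕ) (n-1) (x':ℕ)

/-- The homogeneous initial clustered distribution `μ(0)`. -/
def redInitHom (n : ℕ) (p : Mem1) : Bool × Fin n → ℝ :=
  fun s => match s with
  | (A, x) =>
    |1 - (if A then (1:ℝ) else 0) - p.init| *
    ((n-1).choose (x:ℕ) : ℝ) * p.init ^ (x:ℕ) * (1 - p.init) ^ ((n-1) - (x:ℕ))

/-- The homogeneous cluster: full states where the focal player plays `A` and exactly
`x` of his co-players cooperate. -/
def clusterHom {n : ℕ} (focal : Fin n) (A : Bool) (x : ℕ) : Finset (FullState n) :=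
  Finset.univ.filter fun h =>
    h focal = A ∧ (Finset.univ.filter fun i => i ≠ focal ∧ h i = true).card = x


section Lumping

variable {α β : Type*} [Fintype α] [Fintype β] [DecidableEq β]

def lumpVec (π : α → β) (v : α → ℝ) (b : β) : ℝ :=
  ∑ a with π a = b, v a

lemma sum_lumpVec_mul (π : α → β) (v : α → ℝ) (f : β → ℝ) :
    ∑ b, lumpVec π v b * f b = ∑ a, v a * f (π a) := by
  rw [← Finset.sum_fiberwise _ π]
  refine Finset.sum_congr rfl fun b _ => ?_
  rw [lumpVec, Finset.sum_mul]
  exact Finset.sum_congr rfl fun a ha => by rw [(Finset.mem_filter.1 ha).2]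

lemma lumpVec_vecMul {π : α → β} {M : Matrix α α ℝ} {M' : Matrix β β ℝ}
    (hM : ∀ a, lumpVec π (M a) = M' (π a)) (v : α → ℝ) :
    lumpVec π (v ᵥ* M) = lumpVec π v ᵥ* M' := by
  ext b
  calc lumpVec π (v ᵥ* M) b = ∑ a, v a * lumpVec π (M a) b := by
        simp only [lumpVec, vecMul, dotProduct, Finset.mul_sum]
        exact Finset.sum_comm
    _ = (lumpVec π v ᵥ* M') b := by
        simp only [hM, vecMul, dotProduct, sum_lumpVec_mul]

variable [DecidableEq α]

lemma lumpVec_vecMul_pow {π : α → β} {M : Matrix α α ℝ} {M' : Matrix β β ℝ}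
    (hM : ∀ a, lumpVec π (M a) = M' (π a)) (v : α → ℝ) (t : ℕ) :
    lumpVec π (v ᵥ* M ^ t) = lumpVec π v ᵥ* M' ^ t := by
  induction t with
  | zero => simp
  | succ t ih => rw [pow_succ, pow_succ, ← vecMul_vecMul, ← vecMul_vecMul, lumpVec_vecMul hM, ih]

lemma lumpVec_discMean {π : α → β} {M : Matrix α α ℝ} {M' : Matrix β β ℝ}
    (hM : ∀ a, lumpVec π (M a) = M' (π a)) {δ : ℝ} {v : α → ℝ}
    (hv : ∀ a, Summable fun t : ℕ => δ ^ t * (v ᵥ* M ^ t) a) :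
    lumpVec π (discMean δ v M) = discMean δ (lumpVec π v) M' := by
  ext b
  simp only [lumpVec, discMean, ← Finset.mul_sum]
  rw [← Summable.tsum_finsetSum fun a _ => hv a]
  simp only [← Finset.mul_sum, ← lumpVec_vecMul_pow hM, lumpVec]

end Lumping

section Stochastic

variable {α : Type*} [Fintype α] [DecidableEq α]

lemma vecMul_mem_stdSimplex {M : Matrix α α ℝ} (hM : M ∈ rowStochastic ℝ α) {v : α → ℝ}
    (hv : v ∈ stdSimplex ℝ α) : v ᵥ* M ∈ stdSimplex ℝ α := by
  refine ⟨nonneg_vecMul_of_mem_rowStochastic hM hv.1, ?_⟩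
  simpa [dotProduct] using
    vecMul_dotProduct_one_eq_one_rowStochastic hM (x := v) (by simpa [dotProduct] using hv.2)

lemma summable_discount_vecMul_pow {M : Matrix α α ℝ} (hM : M ∈ rowStochastic ℝ α)
    {v : α → ℝ} (hv : v ∈ stdSimplex ℝ α) {δ : ℝ} (hδ0 : 0 ≤ δ) (hδ1 : δ < 1) (a : α) :
    Summable fun t : ℕ => δ ^ t * (v ᵥ* M ^ t) a := by
  have hw t : (v ᵥ* M ^ t) a ∈ Set.Icc 0 1 :=
    mem_Icc_of_mem_stdSimplex (vecMul_mem_stdSimplex (pow_mem hM t) hv) a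
  refine (summable_geometric_of_lt_one hδ0 hδ1).of_nonneg_of_le
    (fun t => mul_nonneg (pow_nonneg hδ0 t) (hw t).1) fun t => ?_
  simpa using mul_le_mul_of_nonneg_left (hw t).2 (pow_nonneg hδ0 t)

end Stochastic

def bernoulliVec (q : ℝ) (b : Bool) : ℝ := if b then q else 1 - q

lemma bernoulliVec_mem_stdSimplex {q : ℝ} (hq : q ∈ Set.Icc 0 1) :
    bernoulliVec q ∈ stdSimplex ℝ Bool := by
  refine ⟨fun b => ?_, by simp [bernoulliVec]⟩
  cases b <;> simp [bernoulliVec, hq.1, hq.2]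

lemma abs_one_sub_ite_sub {q : ℝ} (hq : q ∈ Set.Icc 0 1) (b : Bool) :
    |1 - (if b then (1:ℝ) else 0) - q| = bernoulliVec q b := by
  cases b
  · simp [bernoulliVec, hq.2]
  · simp [bernoulliVec, hq.1]

lemma prod_mem_stdSimplex {ι κ : Type*} [Fintype ι] [DecidableEq ι] [Fintype κ]
    {F : ι → κ → ℝ} (hF : ∀ i, F i ∈ stdSimplex ℝ κ) :
    (fun g : ι → κ => ∏ i, F i (g i)) ∈ stdSimplex ℝ (ι → κ) :=
  ⟨fun g => Finset.prod_nonneg fun i _ => (hF i).1 (g i), by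
    rw [← Fintype.prod_sum]; exact Finset.prod_eq_one fun i _ => (hF i).2⟩

section GeneratingPolynomial

open Polynomial

lemma coeff_prod_C_mul_X_add_C {ι : Type*} [Fintype ι] [DecidableEq ι]
    (F : ι → Bool → ℝ) (m : ℕ) :
    (∏ i, (C (F i true) * X + C (F i false))).coeff m
      = ∑ g : ι → Bool with #{i | g i} = m, ∏ i, F i (g i) := by
  have hfac i : C (F i true) * X + C (F i false)
      = ∑ b : Bool, C (F i b) * X ^ (if b then 1 else 0) := by
    simp
  simp_rw [hfac, Fintype.prod_sum, prod_mul_distrib, ← map_prod, prod_pow_eq_pow_sum,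
    finsetSum_coeff, coeff_C_mul_X_pow, sum_boole, Nat.cast_id]
  rw [sum_filter]
  exact sum_congr rfl fun g _ => by simp only [@eq_comm _ m]

def bernoulliPoly (q : ℝ) : ℝ[X] := C q * X + C (1 - q)

lemma coeff_bernoulliPoly_pow (q : ℝ) (k j : ℕ) :
    (bernoulliPoly q ^ k).coeff j = k.choose j * q ^ j * (1 - q) ^ (k - j) := by
  have hterm m : (C q * X) ^ m * C (1 - q) ^ (k - m) * (k.choose m : ℝ[X])
      = C (k.choose m * q ^ m * (1 - q) ^ (k - m)) * X ^ m := by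
    simp only [mul_pow, C_mul, C_pow, ← C_eq_natCast]; ring
  simp_rw [bernoulliPoly, add_pow, hterm, finsetSum_coeff, coeff_C_mul_X_pow, Finset.sum_ite_eq,
    Finset.mem_range]
  split_ifs with h
  · rfl
  · simp [Nat.choose_eq_zero_of_lt (by omega : k < j)]

lemma coeff_bernoulliPoly_pow_mul (pc pd : ℝ) (x k m : ℕ) :
    (bernoulliPoly pc ^ x * bernoulliPoly pd ^ (k - x)).coeff m = transfer pc pd x k m := by
  rw [coeff_mul, Finset.Nat.sum_antidiagonal_eq_sum_range_succ_mk, transfer]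
  refine Finset.sum_congr rfl fun j _ => ?_
  simp only [coeff_bernoulliPoly_pow]
  ring

lemma sum_prod_bernoulliVec_card_eq {ι : Type*} [Fintype ι] [DecidableEq ι]
    (q : ι → ℝ) (m : ℕ) :
    ∑ g : ι → Bool with #{i | g i} = m, ∏ i, bernoulliVec (q i) (g i)
      = (∏ i, bernoulliPoly (q i)).coeff m :=
  (coeff_prod_C_mul_X_add_C _ m).symm

lemma prod_bernoulliPoly_ite {ι : Type*} [Fintype ι] (c : ι → Bool) (pc pd : ℝ) :
    ∏ i, bernoulliPoly (if c i then pc else pd)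
      = bernoulliPoly pc ^ #{i | c i} * bernoulliPoly pd ^ (Fintype.card ι - #{i | c i}) := by
  have hcard := Finset.card_filter_add_card_filter_not (s := univ) fun i => c i = true
  rw [Finset.prod_apply_ite, Finset.prod_const, Finset.prod_const]
  rw [Finset.card_univ] at hcard
  congr 2
  omega

end GeneratingPolynomial

section Cluster

variable {n : ℕ}

def coCount (focal : Fin n) (h : FullState n) : ℕ :=
  #{j : {j // j ≠ focal} | h j}

lemma card_filter_ne_and_eq_coCount (focal : Fin n) (h : FullState n) :
    #{i | i ≠ focal ∧ h i = true} = coCount focal h := by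
  rw [coCount, ← Fintype.card_subtype, ← Fintype.card_subtype]
  exact Fintype.card_congr (Equiv.subtypeSubtypeEquivSubtypeInter _ _).symm

lemma nCoop_eq_coCount_add (focal : Fin n) (h : FullState n) :
    nCoop h = coCount focal h + if h focal then 1 else 0 := by
  rw [nCoop, coCount, Finset.card_filter, Finset.card_filter,
    Fintype.sum_eq_add_sum_subtype_ne _ focal, add_comm]

lemma card_subtype_ne (focal : Fin n) : Fintype.card {j // j ≠ focal} = n - 1 := by
  simp [Fintype.card_subtype_compl]

lemma coCount_lt (focal : Fin n) (h : FullState n) : coCount focal h < n := by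
  have hle := card_filter_le (univ : Finset {j // j ≠ focal}) fun j => h j = true
  rw [card_univ, card_subtype_ne] at hle
  exact lt_of_le_of_lt hle (Nat.sub_lt focal.pos one_pos)

def clusterOf (focal : Fin n) (h : FullState n) : Bool × Fin n :=
  (h focal, ⟨coCount focal h, coCount_lt focal h⟩)

lemma lumpVec_clusterOf (focal : Fin n) (v : FullState n → ℝ) (A : Bool) (x : Fin n) :
    lumpVec (clusterOf focal) v (A, x) = ∑ h ∈ clusterHom focal A x, v h := by
  simp only [lumpVec, clusterHom, clusterOf, card_filter_ne_and_eq_coCount, Prod.ext_iff,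
    Fin.ext_iff]

lemma sum_clusterHom_prod (focal : Fin n) (A : Bool) (x : ℕ) (F : Fin n → Bool → ℝ) :
    ∑ h ∈ clusterHom focal A x, ∏ i, F i (h i)
      = F focal A * ∑ g : {j // j ≠ focal} → Bool with #{j | g j} = x,
        ∏ j : {j // j ≠ focal}, F j (g j) := by
  set e := Equiv.funSplitAt focal Bool
  have hA (g : {j // j ≠ focal} → Bool) : e.symm (A, g) focal = A := by simp [e]
  have hres (g : {j // j ≠ focal} → Bool) (j : {j // j ≠ focal}) : e.symm (A, g) j = g j := by
    simp [e, j.2]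
  rw [Finset.mul_sum]
  apply sum_nbij' (fun h => (e h).2) (fun g => e.symm (A, g))
  · intro h hh
    simp_all [e, clusterHom, card_filter_ne_and_eq_coCount, coCount]
  · intro g hg
    simpa [clusterHom, card_filter_ne_and_eq_coCount, coCount, hA, hres] using hg
  · intro h hh
    rw [← (Finset.mem_filter.1 hh).2.1]
    exact e.symm_apply_apply h
  · intro g _
    simp
  · intro h hh
    rw [Fintype.prod_eq_mul_prod_subtype_ne _ focal, (Finset.mem_filter.1 hh).2.1]
    rfl

end Cluster

section HomogeneousStrategy

variable {n : ℕ} {p : Mem1}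

lemma fullM_apply (h h' : FullState n) :
    fullM (fun _ => p) h h'
      = ∏ i, bernoulliVec (p.cond (h i) (nCoop h - if h i then 1 else 0)) (h' i) := rfl

lemma fullInit_eq_prod (hp : p.valid) :
    fullInit (fun _ => p) = fun h : FullState n => ∏ i, bernoulliVec p.init (h i) := by
  funext h
  simp only [fullInit, abs_one_sub_ite_sub hp.1]

lemma fullM_mem_rowStochastic (hp : p.valid) :
    fullM (fun _ => p) ∈ rowStochastic ℝ (FullState n) :=
  mem_rowStochastic_iff_sum.2
    ⟨fun _ => (prod_mem_stdSimplex fun _ => bernoulliVec_mem_stdSimplex (hp.2 _ _)).1,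
     fun _ => (prod_mem_stdSimplex fun _ => bernoulliVec_mem_stdSimplex (hp.2 _ _)).2⟩

lemma fullInit_mem_stdSimplex (hp : p.valid) :
    fullInit (fun _ => p) ∈ stdSimplex ℝ (FullState n) := by
  rw [fullInit_eq_prod hp]
  exact prod_mem_stdSimplex fun _ => bernoulliVec_mem_stdSimplex hp.1

lemma lumpVec_fullInit (hp : p.valid) (focal : Fin n) :
    lumpVec (clusterOf focal) (fullInit (fun _ => p)) = redInitHom n p := by
  ext ⟨A, x⟩
  simp only [lumpVec_clusterOf, fullInit_eq_prod hp, sum_clusterHom_prod,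
    sum_prod_bernoulliVec_card_eq, Finset.prod_const, Finset.card_univ,
    card_subtype_ne, coeff_bernoulliPoly_pow, redInitHom, abs_one_sub_ite_sub hp.1]
  ring

lemma lumpVec_fullM (hp : p.valid) (focal : Fin n) (h : FullState n) :
    lumpVec (clusterOf focal) (fullM (fun _ => p) h) = redMHom n p (clusterOf focal h) := by
  ext ⟨A', x'⟩
  have hq_focal : p.cond (h focal) (nCoop h - if h focal then 1 else 0)
      = p.cond (h focal) (coCount focal h) := by
    rw [nCoop_eq_coCount_add focal, Nat.add_sub_cancel]
  have hq_co (j : {j // j ≠ focal}) : p.cond (h j) (nCoop h - if h j then 1 else 0)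
      = if h j then p.cond true (coCount focal h + (if h focal then 1 else 0) - 1)
        else p.cond false (coCount focal h + (if h focal then 1 else 0)) := by
    rw [nCoop_eq_coCount_add focal]
    cases h j <;> simp
  simp only [lumpVec_clusterOf, fullM_apply, sum_clusterHom_prod,
    sum_prod_bernoulliVec_card_eq, hq_focal, hq_co, prod_bernoulliPoly_ite, card_subtype_ne,
    coeff_bernoulliPoly_pow_mul]
  dsimp only [clusterOf, redMHom, Matrix.of_apply]
  rw [abs_one_sub_ite_sub (hp.2 _ _)]
  rfl

end HomogeneousStrategy

theorem cooperation_rate_full_eq_reduced_general (n : ℕ)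
    (p : Mem1) (hp : p.valid)
    (focal : Fin n)
    (δ : ℝ) (hδ0 : 0 < δ) (hδ1 : δ < 1) :
    ∑ h : FullState n,
        ((nCoop h : ℝ) / n) * discMean δ (fullInit (fun _ => p)) (fullM (fun _ => p)) h
      = (∑ x : Fin n,
           discMean δ (redInitHom n p) (redMHom n p) (true, x) * (((x:ℕ) + 1) / n))
        + ∑ x : Fin n,
           discMean δ (redInitHom n p) (redMHom n p) (false, x) * ((x:ℕ) / n) := by
  set v := discMean δ (fullInit (fun _ => p)) (fullM (fun _ => p))
  have hlump : lumpVec (clusterOf focal) v = discMean δ (redInitHom n p) (redMHom n p) := by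
    rw [lumpVec_discMean (lumpVec_fullM hp focal) fun h => summable_discount_vecMul_pow
      (fullM_mem_rowStochastic hp) (fullInit_mem_stdSimplex hp) hδ0.le hδ1 h,
      lumpVec_fullInit hp focal]
  let rate (s : Bool × Fin n) : ℝ := ((s.2 : ℕ) + if s.1 then 1 else 0 : ℝ) / n
  have hrate (h : FullState n) : (nCoop h : ℝ) / n = rate (clusterOf focal h) := by
    simp only [rate, clusterOf, nCoop_eq_coCount_add focal h]
    split_ifs <;> simp
  calc ∑ h, (nCoop h : ℝ) / n * v h = ∑ h, v h * rate (clusterOf focal h) := by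
        simp_rw [hrate, mul_comm]
    _ = ∑ s, lumpVec (clusterOf focal) v s * rate s := (sum_lumpVec_mul _ _ _).symm
    _ = _ := by
        rw [hlump, Fintype.sum_prod_type, Fintype.sum_bool]
        simp [rate]

/-- When all `n` players use the same memory-1 strategy `p`, the
cooperation rate computed from the full chain's discounted mean distribution equals
that computed from the reduced chain's discounted mean distribution. -/
theorem cooperation_rate_full_eq_reduced (n : ℕ) (hn : 2 ≤ n)
    (p : Mem1) (hp : p.valid)
    (focal : Fin n) (hfocal : (focal : ℕ) = 0)
    (δ : ℝ) (hδ0 : 0 < δ) (hδ1 : δ < 1) :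
    ∑ h : FullState n,
        ((nCoop h : ℝ) / n) * discMean δ (fullInit (fun _ => p)) (fullM (fun _ => p)) h
      = (∑ x : Fin n,
           discMean δ (redInitHom n p) (redMHom n p) (true, x) * (((x:ℕ) + 1) / n))
        + ∑ x : Fin n,
           discMean δ (redInitHom n p) (redMHom n p) (false, x) * ((x:ℕ) / n) :=
  cooperation_rate_full_eq_reduced_general n p hp focal δ hδ0 hδ1
end
end
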